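/- arXiv:2501.05481 — 5 statements merged into one kernel-verified Lean document; each statement's English description precedes it below -/
import Mathlib

section
/- If a behavioral strategy profile σ of the infinitely repeated game with perfect monitoring is a Blackwell subgame-perfect Nash equilibrium (i.e., there exists δ̲ < 1 such that σ is an SPNE at every discount factor vector δ = (δ_1,…,δ_n) with δ_i ≥ δ̲ for all i), then for every finite history h the prescribed mixed action profile σ(h) belongs to 𝒜^MI, i.e., for every player i and every action a_i in the support of σ_i(h), g_i(a_i, σ_{-i}(h)) = g_i(σ(h)). -/
/-!
In an equilibrium, player `i`'s payoff is the `σᵢ(h)`-average of the payoffs of the one-shot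
deviations "play `aᵢ` now, then follow `σ`", and no such deviation is profitable; hence every
`aᵢ` in the support yields exactly the equilibrium payoff, at every `δ ∈ [δ̲, 1)`. Both payoffs
are `(1 - δ)` times power series in `δ` with bounded coefficients, so the identity theorem
equates all their coefficients, in particular the constant ones, which are the stage payoffs
`gᵢ(aᵢ, σ₋ᵢ(h))` and `gᵢ(σ(h))`.
-/

open Finset

section StageGame

variable {I : Type*} [Fintype I] [DecidableEq I]
variable {A : I → Type*} [∀ i, Fintype (A i)] [∀ i, DecidableEq (A i)] [∀ i, Nonempty (A i)]

/-- `α` is a profile of mixed actions: each component is a probability vector. -/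
def IsMixed (α : ∀ i, A i → ℝ) : Prop :=
  ∀ i, (∀ a, 0 ≤ α i a) ∧ (∑ a, α i a) = 1

/-- The point mass on a pure action. -/
def pureAction {I : Type*} {A : I → Type*} [∀ i, DecidableEq (A i)] {i : I} (a : A i) :
    A i → ℝ := fun b => if b = a then 1 else 0

/-- The profile of point masses on a pure action profile. -/
def pureProfile (a : ∀ i, A i) : ∀ i, A i → ℝ := fun i => pureAction (a i)

/-- Multilinear extension of the reward function to mixed action profiles. -/
noncomputable def mixedPayoff (g : I → (∀ i, A i) → ℝ) (i : I) (α : ∀ j, A j → ℝ) : ℝ :=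
  ∑ a : ∀ j, A j, (∏ j, α j (a j)) * g i a

/-- Payoff to player `i` from playing the pure action `ai` against `α₋ᵢ`. -/
noncomputable def devPayoff (g : I → (∀ i, A i) → ℝ) (i : I) (α : ∀ j, A j → ℝ)
    (ai : A i) : ℝ :=
  mixedPayoff g i (Function.update α i (pureAction ai))

/-- The set `𝒜^MI` of myopically indifferent mixed action profiles. -/
def MIset (g : I → (∀ i, A i) → ℝ) : Set (∀ i, A i → ℝ) :=
  {α | IsMixed α ∧ ∀ i, ∀ ai : A i, 0 < α i ai → devPayoff g i α ai = mixedPayoff g i α}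

/-- Nash equilibrium of the stage game (in mixed strategies). -/
def IsStageNash (g : I → (∀ i, A i) → ℝ) (α : ∀ i, A i → ℝ) : Prop :=
  IsMixed α ∧ ∀ (i : I) (ai : A i), devPayoff g i α ai ≤ mixedPayoff g i α

end StageGame

section Repeated

variable {I : Type*} [Fintype I] [DecidableEq I]
variable {A : I → Type*} [∀ i, Fintype (A i)] [∀ i, DecidableEq (A i)] [∀ i, Nonempty (A i)]

/-- A behavioral strategy profile is valid if, after each history (a finite list of pure
action profiles, most recent first), every player's prescribed mixing is a probability
vector. -/
def ValidStrat (σ : ∀ i : I, List (∀ j, A j) → A i → ℝ) : Prop :=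
  ∀ i h, (∀ a, 0 ≤ σ i h a) ∧ (∑ a, σ i h a) = 1

/-- Probability of a finite history (most recent action profile first) under `σ`. -/
noncomputable def histProb (σ : ∀ i : I, List (∀ j, A j) → A i → ℝ) :
    List (∀ j, A j) → ℝ
  | [] => 1
  | a :: h => (∏ i, σ i h (a i)) * histProb σ h

/-- Expected reward of player `i` in round `t + 1` under `σ`. -/
noncomputable def expReward (g : I → (∀ i, A i) → ℝ)
    (σ : ∀ i : I, List (∀ j, A j) → A i → ℝ) (i : I) (t : ℕ) : ℝ :=
  ∑ v : Fin (t + 1) → (∀ j, A j), histProb σ (List.ofFn v) * g i (v 0)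

/-- Average discounted payoff of player `i` under `σ` at discount factor vector `δ`. -/
noncomputable def payoff (g : I → (∀ i, A i) → ℝ)
    (σ : ∀ i : I, List (∀ j, A j) → A i → ℝ) (δ : I → ℝ) (i : I) : ℝ :=
  (1 - δ i) * ∑' t : ℕ, δ i ^ t * expReward g σ i t

/-- `σ` is a Nash equilibrium of the repeated game at `δ`. -/
def IsNash (g : I → (∀ i, A i) → ℝ)
    (σ : ∀ i : I, List (∀ j, A j) → A i → ℝ) (δ : I → ℝ) : Prop :=
  ValidStrat σ ∧
    ∀ (i : I) (τ : List (∀ j, A j) → A i → ℝ),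
      (∀ h, (∀ a, 0 ≤ τ h a) ∧ (∑ a, τ h a) = 1) →
      payoff g (Function.update σ i τ) δ i ≤ payoff g σ δ i

/-- The continuation strategy profile after history `h`. -/
def contStrat (σ : ∀ i : I, List (∀ j, A j) → A i → ℝ) (h : List (∀ j, A j)) :
    ∀ i : I, List (∀ j, A j) → A i → ℝ :=
  fun i h' => σ i (h' ++ h)

/-- `σ` is a subgame-perfect Nash equilibrium at `δ`. -/
def IsSPNE (g : I → (∀ i, A i) → ℝ)
    (σ : ∀ i : I, List (∀ j, A j) → A i → ℝ) (δ : I → ℝ) : Prop :=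
  ∀ h : List (∀ j, A j), IsNash g (contStrat σ h) δ

/-- `σ` is a Blackwell SPNE above `δlow`: an SPNE at every discount factor vector all of
whose components lie in `[δlow, 1)`. -/
def IsBlackwellSPNE (g : I → (∀ i, A i) → ℝ)
    (σ : ∀ i : I, List (∀ j, A j) → A i → ℝ) (δlow : ℝ) : Prop :=
  ∀ δ : I → ℝ, (∀ i, δlow ≤ δ i ∧ δ i < 1) → IsSPNE g σ δ

end Repeated

open FormalMultilinearSeries in
theorem eq_zero_of_tsum_mul_pow_eq_zero {c : ℕ → ℝ} {C a : ℝ} (hC : ∀ t, |c t| ≤ C)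
    (ha : a < 1) (hz : ∀ x ∈ Set.Ioo a 1, ∑' t, c t * x ^ t = 0) : c = 0 := by
  set p := ofScalars ℝ c
  have hp_sum : ∀ x, p.sum x = ∑' t, c t * x ^ t := fun x => by
    simpa [smul_eq_mul, ofScalarsSum] using ofScalars_sum_eq c x
  have hrad : (1 : ENNReal) ≤ p.radius :=
    mod_cast p.le_radius_of_bound C fun n => by simpa [p, ofScalars_norm] using hC n
  have hp : HasFPowerSeriesOnBall p.sum p 0 1 :=
    (p.hasFPowerSeriesOnBall (one_pos.trans_le hrad)).mono one_pos hrad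
  have hball : Metric.eball (0 : ℝ) 1 = Metric.ball 0 1 := by
    rw [← ENNReal.coe_one, Metric.eball_coe, NNReal.coe_one]
  set x₀ := (max a 0 + 1) / 2
  have hx₀ : x₀ ∈ Set.Ioo (max a 0) 1 := ⟨by grind, by grind⟩
  have hvanish : p.sum =ᶠ[nhds x₀] 0 := by
    filter_upwards [Ioo_mem_nhds (lt_of_le_of_lt (le_max_left a 0) hx₀.1) hx₀.2] with x hx
    exact (hp_sum x).trans (hz x hx)
  have hzero : Set.EqOn p.sum 0 (Metric.ball 0 1) :=
    (hball ▸ hp.analyticOnNhd).eqOn_zero_of_preconnected_of_eventuallyEq_zero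
      (convex_ball 0 1).isPreconnected
      (by rw [Metric.mem_ball, dist_zero_right, Real.norm_eq_abs]; grind) hvanish
  have hp_zero : p = 0 := hp.hasFPowerSeriesAt.eq_zero_of_eventually
    (Filter.eventuallyEq_of_mem (Metric.ball_mem_nhds 0 one_pos) hzero)
  exact (ofScalars_series_eq_zero ℝ).1 hp_zero

theorem eq_of_sum_mul_eq_of_le {ι : Type*} [Fintype ι] {w f : ι → ℝ} {m : ℝ}
    (hw : ∀ b, 0 ≤ w b) (hw_sum : ∑ b, w b = 1) (hf : ∀ b, f b ≤ m)
    (hm : ∑ b, w b * f b = m) {b : ι} (hb : 0 < w b) : f b = m := by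
  have hgap : ∑ b, w b * (m - f b) = 0 := by
    simp only [mul_sub, Finset.sum_sub_distrib, ← Finset.sum_mul, hw_sum, one_mul, hm, sub_self]
  have hterm := (Finset.sum_eq_zero_iff_of_nonneg fun c _ =>
    mul_nonneg (hw c) (sub_nonneg.2 (hf c))).1 hgap b (Finset.mem_univ b)
  linarith [(mul_eq_zero.1 hterm).resolve_left hb.ne']

section FirstRound

variable {I : Type*} {A : I → Type*}

def withFirstRound {i : I} (τ : List (∀ j, A j) → A i → ℝ) (β : A i → ℝ) :
    List (∀ j, A j) → A i → ℝ :=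
  fun h => if h = [] then β else τ h

@[simp]
theorem withFirstRound_nil {i : I} (τ : List (∀ j, A j) → A i → ℝ) (β : A i → ℝ) :
    withFirstRound τ β [] = β :=
  if_pos rfl

theorem withFirstRound_of_ne_nil {i : I} (τ : List (∀ j, A j) → A i → ℝ) (β : A i → ℝ)
    {h : List (∀ j, A j)} (hh : h ≠ []) : withFirstRound τ β h = τ h :=
  if_neg hh

@[simp]
theorem withFirstRound_self {i : I} (τ : List (∀ j, A j) → A i → ℝ) :
    withFirstRound τ (τ []) = τ := by
  funext h
  by_cases hh : h = []
  · subst hh; rfl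
  · exact withFirstRound_of_ne_nil τ _ hh

theorem withFirstRound_prob [∀ i, Fintype (A i)] {i : I} {τ : List (∀ j, A j) → A i → ℝ}
    {β : A i → ℝ} (hτ : ∀ h, (∀ a, 0 ≤ τ h a) ∧ ∑ a, τ h a = 1)
    (hβ : (∀ a, 0 ≤ β a) ∧ ∑ a, β a = 1) :
    ∀ h, (∀ a, 0 ≤ withFirstRound τ β h a) ∧ ∑ a, withFirstRound τ β h a = 1 := fun h => by
  by_cases hh : h = []
  · subst hh
    simpa using hβ
  · simpa only [withFirstRound_of_ne_nil τ β hh] using hτ h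

theorem pureAction_prob [∀ i, Fintype (A i)] [∀ i, DecidableEq (A i)] {i : I} (a : A i) :
    (∀ x, 0 ≤ pureAction a x) ∧ ∑ x, pureAction a x = 1 :=
  ⟨fun x => by unfold pureAction; split_ifs <;> norm_num, by simp [pureAction]⟩

theorem sum_mul_pureAction [∀ i, Fintype (A i)] [∀ i, DecidableEq (A i)] {i : I}
    (β : A i → ℝ) (x : A i) : ∑ b, β b * pureAction b x = β x := by
  simp [pureAction]

theorem ValidStrat.update [DecidableEq I] [∀ i, Fintype (A i)]
    {σ : ∀ i : I, List (∀ j, A j) → A i → ℝ} (hσ : ValidStrat σ) (i : I)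
    {τ : List (∀ j, A j) → A i → ℝ} (hτ : ∀ h, (∀ a, 0 ≤ τ h a) ∧ ∑ a, τ h a = 1) :
    ValidStrat (Function.update σ i τ) := fun j h => by
  rcases eq_or_ne j i with rfl | hj
  · simpa using hτ h
  · simpa [Function.update_of_ne hj] using hσ j h

variable [DecidableEq I] (σ : ∀ i : I, List (∀ j, A j) → A i → ℝ) (i : I)

theorem update_withFirstRound_nil (β : A i → ℝ) :
    (fun j => Function.update σ i (withFirstRound (σ i) β) j []) =
      Function.update (fun j => σ j []) i β := by
  funext j
  rcases eq_or_ne j i with rfl | hj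
  · simp
  · simp [Function.update_of_ne hj]

theorem update_withFirstRound_of_ne_nil (β : A i → ℝ) {h : List (∀ j, A j)} (hh : h ≠ [])
    (j : I) : Function.update σ i (withFirstRound (σ i) β) j h = σ j h := by
  rcases eq_or_ne j i with rfl | hj
  · simp [withFirstRound_of_ne_nil _ _ hh]
  · simp [Function.update_of_ne hj]

theorem prod_update_withFirstRound_nil [Fintype I] (β : A i → ℝ) (a : ∀ j, A j) :
    ∏ j, Function.update σ i (withFirstRound (σ i) β) j [] (a j) =
      β (a i) * ∏ j ∈ Finset.univ.erase i, σ j [] (a j) := by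
  rw [← Finset.mul_prod_erase _ _ (Finset.mem_univ i), Function.update_self, withFirstRound_nil]
  congr 1
  exact Finset.prod_congr rfl fun j hj => by rw [Function.update_of_ne (Finset.ne_of_mem_erase hj)]

end FirstRound

section Strategies

variable {I : Type*} [Fintype I] {A : I → Type*} [∀ i, Fintype (A i)]

theorem histProb_nonneg {σ : ∀ i : I, List (∀ j, A j) → A i → ℝ} (hσ : ValidStrat σ) :
    ∀ l, 0 ≤ histProb σ l
  | [] => zero_le_one
  | a :: h => mul_nonneg (Finset.prod_nonneg fun j _ => (hσ j h).1 (a j)) (histProb_nonneg hσ h)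

variable [DecidableEq I]

theorem sum_histProb_ofFn {σ : ∀ i : I, List (∀ j, A j) → A i → ℝ} (hσ : ValidStrat σ) :
    ∀ t : ℕ, ∑ v : Fin t → (∀ j, A j), histProb σ (List.ofFn v) = 1
  | 0 => by simp [histProb]
  | t + 1 => by
    rw [← (Fin.consEquiv fun _ : Fin (t + 1) => ∀ j, A j).sum_comp, Fintype.sum_prod_type,
      Finset.sum_comm]
    have hround : ∀ w : Fin t → ∀ j, A j,
        ∑ a : ∀ j, A j, histProb σ (List.ofFn (Fin.consEquiv _ (a, w))) =
          histProb σ (List.ofFn w) := fun w => by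
      simp only [Fin.consEquiv, Equiv.coe_fn_mk, List.ofFn_cons, histProb, ← Finset.sum_mul,
        ← Fintype.piFinset_univ, ← Finset.prod_univ_sum, (hσ _ _).2, Finset.prod_const_one,
        one_mul]
    simp only [hround, sum_histProb_ofFn hσ t]

theorem abs_expReward_le {σ : ∀ i : I, List (∀ j, A j) → A i → ℝ} (hσ : ValidStrat σ)
    (g : I → (∀ i, A i) → ℝ) (i : I) (t : ℕ) : |expReward g σ i t| ≤ ∑ a, |g i a| := by
  have hg : ∀ a, |g i a| ≤ ∑ a, |g i a| := fun a =>
    Finset.single_le_sum (f := fun a => |g i a|) (fun _ _ => abs_nonneg _) (Finset.mem_univ a)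
  calc |expReward g σ i t|
      ≤ ∑ v : Fin (t + 1) → (∀ j, A j), |histProb σ (List.ofFn v) * g i (v 0)| :=
        Finset.abs_sum_le_sum_abs _ _
    _ ≤ ∑ v : Fin (t + 1) → (∀ j, A j), histProb σ (List.ofFn v) * ∑ a, |g i a| := by
        refine Finset.sum_le_sum fun v _ => ?_
        rw [abs_mul, abs_of_nonneg (histProb_nonneg hσ _)]
        exact mul_le_mul_of_nonneg_left (hg _) (histProb_nonneg hσ _)
    _ = ∑ a, |g i a| := by rw [← Finset.sum_mul, sum_histProb_ofFn hσ, one_mul]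

theorem summable_pow_mul_expReward {σ : ∀ i : I, List (∀ j, A j) → A i → ℝ}
    (hσ : ValidStrat σ) (g : I → (∀ i, A i) → ℝ) (i : I) {x : ℝ} (hx : |x| < 1) :
    Summable fun t => x ^ t * expReward g σ i t := by
  refine Summable.of_norm_bounded
    ((summable_geometric_of_lt_one (abs_nonneg x) hx).mul_right (∑ a, |g i a|)) fun t => ?_
  rw [Real.norm_eq_abs, abs_mul, abs_pow]
  exact mul_le_mul_of_nonneg_left (abs_expReward_le hσ g i t) (pow_nonneg (abs_nonneg x) t)

theorem tsum_sub_mul_pow_eq_zero_of_payoff_eq {σ τ : ∀ i : I, List (∀ j, A j) → A i → ℝ}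
    (hσ : ValidStrat σ) (hτ : ValidStrat τ) (g : I → (∀ i, A i) → ℝ) {δ : I → ℝ} {i : I}
    (hδ : |δ i| < 1) (heq : payoff g σ δ i = payoff g τ δ i) :
    ∑' t, (expReward g σ i t - expReward g τ i t) * δ i ^ t = 0 := by
  have hδ_ne : 1 - δ i ≠ 0 := by linarith [le_abs_self (δ i)]
  have hsums := mul_left_cancel₀ hδ_ne heq
  rw [← sub_eq_zero.2 hsums,
    ← (summable_pow_mul_expReward hσ g i hδ).tsum_sub (summable_pow_mul_expReward hτ g i hδ)]
  exact tsum_congr fun t => by ring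

theorem expReward_zero (g : I → (∀ i, A i) → ℝ) (σ : ∀ i : I, List (∀ j, A j) → A i → ℝ)
    (i : I) : expReward g σ i 0 = mixedPayoff g i fun j => σ j [] := by
  rw [expReward, ← (Equiv.funUnique (Fin 1) (∀ j, A j)).symm.sum_comp]
  simp [histProb, mixedPayoff]

variable [∀ i, DecidableEq (A i)]

section

variable (σ : ∀ i : I, List (∀ j, A j) → A i → ℝ) (i : I)

theorem histProb_update_withFirstRound (β : A i → ℝ) :
    ∀ l ≠ [], histProb (Function.update σ i (withFirstRound (σ i) β)) l =
      ∑ b, β b * histProb (Function.update σ i (withFirstRound (σ i) (pureAction b))) l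
  | [], hl => absurd rfl hl
  | [a], _ => by
    simp only [histProb, prod_update_withFirstRound_nil, mul_one, ← mul_assoc, ← Finset.sum_mul,
      sum_mul_pureAction]
  | a :: b :: h, _ => by
    simp only [histProb.eq_2 _ a (b :: h),
      update_withFirstRound_of_ne_nil σ i _ (List.cons_ne_nil b h),
      histProb_update_withFirstRound β (b :: h) (List.cons_ne_nil b h), Finset.mul_sum,
      mul_left_comm]

theorem expReward_update_withFirstRound (g : I → (∀ i, A i) → ℝ) (β : A i → ℝ) (k : I)
    (t : ℕ) : expReward g (Function.update σ i (withFirstRound (σ i) β)) k t =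
      ∑ b, β b * expReward g (Function.update σ i (withFirstRound (σ i) (pureAction b))) k t := by
  simp only [expReward,
    histProb_update_withFirstRound σ i β _ (List.ofFn_succ ▸ List.cons_ne_nil _ _), Finset.sum_mul,
    Finset.mul_sum, mul_assoc]
  exact Finset.sum_comm

end

theorem payoff_update_withFirstRound {σ : ∀ i : I, List (∀ j, A j) → A i → ℝ}
    (hσ : ValidStrat σ) (g : I → (∀ i, A i) → ℝ) (i : I) (β : A i → ℝ) {δ : I → ℝ} {k : I}
    (hδ : |δ k| < 1) : payoff g (Function.update σ i (withFirstRound (σ i) β)) δ k =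
      ∑ b, β b * payoff g (Function.update σ i (withFirstRound (σ i) (pureAction b))) δ k := by
  have hsum : ∀ b, Summable fun t => δ k ^ t *
      expReward g (Function.update σ i (withFirstRound (σ i) (pureAction b))) k t := fun b =>
    summable_pow_mul_expReward (hσ.update i (withFirstRound_prob (hσ i) (pureAction_prob b))) g k hδ
  simp only [payoff, expReward_update_withFirstRound σ i g β, Finset.mul_sum,
    mul_left_comm _ (β _)]
  rw [Summable.tsum_finsetSum fun b _ => (hsum b).mul_left (β b)]
  simp only [tsum_mul_left, Finset.mul_sum, mul_left_comm _ (β _)]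

theorem IsNash.payoff_update_withFirstRound_pure {g : I → (∀ i, A i) → ℝ}
    {σ : ∀ i : I, List (∀ j, A j) → A i → ℝ} {δ : I → ℝ} (hN : IsNash g σ δ) {i : I}
    (hδ : |δ i| < 1) {b : A i} (hb : 0 < σ i [] b) :
    payoff g (Function.update σ i (withFirstRound (σ i) (pureAction b))) δ i = payoff g σ δ i :=
  eq_of_sum_mul_eq_of_le (hN.1 i []).1 (hN.1 i []).2
    (fun b => hN.2 i _ (withFirstRound_prob (hN.1 i) (pureAction_prob b)))
    (by simpa using (payoff_update_withFirstRound hN.1 g i (σ i []) hδ).symm) hb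

end Strategies

theorem blackwell_spne_plays_MI_general
    {I : Type*} [Fintype I] [DecidableEq I]
    {A : I → Type*} [∀ i, Fintype (A i)] [∀ i, DecidableEq (A i)]
    (g : I → (∀ i, A i) → ℝ)
    (σ : ∀ i : I, List (∀ j, A j) → A i → ℝ)
    (δlow : ℝ) (h1 : δlow < 1)
    (hB : IsBlackwellSPNE g σ δlow) :
    ∀ h : List (∀ j, A j), (fun i => σ i h) ∈ MIset g := by
  intro h
  set σ' := contStrat σ h
  have hσ' : ValidStrat σ' := (hB _ (fun _ => ⟨le_rfl, h1⟩) h).1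
  refine ⟨fun j => hσ' j [], fun i b hb => ?_⟩
  set dev := Function.update σ' i (withFirstRound (σ' i) (pureAction b))
  have hdev : ValidStrat dev := hσ'.update i (withFirstRound_prob (hσ' i) (pureAction_prob b))
  -- `max δlow 0` keeps the discount factors inside the disc of convergence.
  have hcoeff := eq_zero_of_tsum_mul_pow_eq_zero
    (fun t => (abs_sub _ _).trans (add_le_add (abs_expReward_le hdev g i t)
      (abs_expReward_le hσ' g i t))) (max_lt h1 one_pos) fun x hx => by
    have hx1 : |x| < 1 := abs_lt.2 ⟨by linarith [le_max_right δlow 0, hx.1], hx.2⟩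
    have hN : IsNash g σ' fun _ => x :=
      hB _ (fun _ => ⟨(le_max_left _ _).trans hx.1.le, hx.2⟩) h
    exact tsum_sub_mul_pow_eq_zero_of_payoff_eq hdev hσ' g hx1
      (hN.payoff_update_withFirstRound_pure hx1 hb)
  have hdev_zero : expReward g dev i 0 = devPayoff g i (fun j => σ' j []) b := by
    rw [expReward_zero, update_withFirstRound_nil, devPayoff]
  show devPayoff g i (fun j => σ' j []) b = mixedPayoff g i fun j => σ' j []
  rw [← expReward_zero, ← hdev_zero]
  exact sub_eq_zero.1 (congrFun hcoeff 0)

/-- In a Blackwell SPNE, after every history the prescribed mixed action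
profile is myopically indifferent. -/
theorem blackwell_spne_plays_MI
    {I : Type*} [Fintype I] [DecidableEq I]
    {A : I → Type*} [∀ i, Fintype (A i)] [∀ i, DecidableEq (A i)] [∀ i, Nonempty (A i)]
    (g : I → (∀ i, A i) → ℝ)
    (σ : ∀ i : I, List (∀ j, A j) → A i → ℝ)
    (δlow : ℝ) (h0 : 0 ≤ δlow) (h1 : δlow < 1)
    (hB : IsBlackwellSPNE g σ δlow) :
    ∀ h : List (∀ j, A j), (fun i => σ i h) ∈ MIset g :=
  blackwell_spne_plays_MI_general g σ δlow h1 hB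
end

section
/- Patience Lemma: let δ ∈ (0,1), let (x_t)_{t∈ℕ} be a bounded sequence of real numbers, and let x̲, x̄ ∈ ℝ. If x̲ ≤ (1−δ) Σ_{t=τ}^∞ δ^{t−τ} x_t ≤ x̄ for every τ ≥ 0, then for every δ' ∈ (δ,1) it also holds that x̲ ≤ (1−δ') Σ_{t=τ}^∞ δ'^{t−τ} x_t ≤ x̄ for every τ ≥ 0. -/
/-!
Write `V_δ(τ) = (1 - δ) ∑ₜ δᵗ x_{τ+t}`. The recursion `V_δ(n) = (1 - δ) x_n + δ V_δ(n+1)` lets one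
eliminate `x` from `V_{δ'}`, giving
`(1 - δ) V_{δ'}(τ) = (1 - δ') V_δ(τ) + (δ' - δ) · (1 - δ') ∑ₜ δ'ᵗ V_δ(τ+1+t)`.
So `V_{δ'}(τ)` is a convex combination of `V_δ(τ)` and a discounted average of later values of
`V_δ`, all of which lie in `[x̲, x̄]`.
-/

open Set

noncomputable def discountedValue (δ : ℝ) (x : ℕ → ℝ) (τ : ℕ) : ℝ :=
  (1 - δ) * ∑' t : ℕ, δ ^ t * x (τ + t)

theorem summable_pow_mul_of_abs_le {r C : ℝ} {y : ℕ → ℝ} (hr : |r| < 1)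
    (hy : ∀ t, |y t| ≤ C) : Summable fun t => r ^ t * y t :=
  .of_norm_bounded ((summable_geometric_of_lt_one (abs_nonneg r) hr).mul_right C) fun t => by
    rw [Real.norm_eq_abs, abs_mul, abs_pow]
    exact mul_le_mul_of_nonneg_left (hy t) (by positivity)

theorem discountedValue_eq_add {r C : ℝ} {x : ℕ → ℝ} (hr : |r| < 1) (hx : ∀ t, |x t| ≤ C)
    (τ : ℕ) : discountedValue r x τ = (1 - r) * x τ + r * discountedValue r x (τ + 1) := by
  have hs := summable_pow_mul_of_abs_le hr fun t => hx (τ + t)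
  have hshift : ∀ t, r ^ (t + 1) * x (τ + (t + 1)) = r * (r ^ t * x (τ + 1 + t)) := fun t => by
    rw [pow_succ, add_comm t 1, ← add_assoc]; ring
  simp only [discountedValue, hs.tsum_eq_zero_add, hshift, tsum_mul_left, pow_zero, one_mul,
    add_zero]
  ring

theorem discountedValue_mem_Icc {r a b : ℝ} {x : ℕ → ℝ} (hr0 : 0 ≤ r) (hr1 : r < 1)
    (hx : ∀ t, x t ∈ Icc a b) (τ : ℕ) : discountedValue r x τ ∈ Icc a b := by
  have hgeo := hasSum_geometric_of_lt_one hr0 hr1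
  have hs := (summable_pow_mul_of_abs_le (abs_lt.2 ⟨by linarith, hr1⟩)
    fun t => abs_le_max_abs_abs (hx (τ + t)).1 (hx (τ + t)).2).hasSum
  have hlo := hasSum_le (fun t => mul_le_mul_of_nonneg_left (hx (τ + t)).1 (pow_nonneg hr0 t))
    (hgeo.mul_right a) hs
  have hhi := hasSum_le (fun t => mul_le_mul_of_nonneg_left (hx (τ + t)).2 (pow_nonneg hr0 t))
    hs (hgeo.mul_right b)
  have hpos : 0 < 1 - r := sub_pos.2 hr1
  rw [← div_eq_inv_mul, div_le_iff₀ hpos] at hlo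
  rw [← div_eq_inv_mul, le_div_iff₀ hpos] at hhi
  exact ⟨by unfold discountedValue; linarith, by unfold discountedValue; linarith⟩

theorem one_sub_mul_discountedValue_eq {δ δ' C : ℝ} {x : ℕ → ℝ} (hδ0 : 0 ≤ δ) (hδ1 : δ < 1)
    (hδ'0 : 0 ≤ δ') (hδ'1 : δ' < 1) (hx : ∀ t, |x t| ≤ C) (τ : ℕ) :
    (1 - δ) * discountedValue δ' x τ =
      (1 - δ') * discountedValue δ x τ +
        (δ' - δ) * discountedValue δ' (discountedValue δ x) (τ + 1) := by
  set v := discountedValue δ x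
  have hv : ∀ n, |v n| ≤ C := fun n =>
    abs_le.2 (discountedValue_mem_Icc hδ0 hδ1 (fun t => abs_le.1 (hx t)) n)
  have hrec : ∀ n, (1 - δ) * x n = v n - δ * v (n + 1) := fun n => by
    linear_combination -discountedValue_eq_add (abs_lt.2 ⟨by linarith, hδ1⟩) hx n
  have hδ' : |δ'| < 1 := abs_lt.2 ⟨by linarith, hδ'1⟩
  have hs := summable_pow_mul_of_abs_le hδ' fun t => hv (τ + t)
  have hs' := (summable_pow_mul_of_abs_le hδ' fun t => hv (τ + 1 + t)).mul_left δ
  calc (1 - δ) * discountedValue δ' x τ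
      = (1 - δ') * ∑' t, (δ' ^ t * v (τ + t) - δ * (δ' ^ t * v (τ + 1 + t))) := by
        simp only [discountedValue, ← tsum_mul_left]
        refine tsum_congr fun t => ?_
        rw [add_right_comm]
        linear_combination (1 - δ') * δ' ^ t * hrec (τ + t)
    _ = discountedValue δ' v τ - δ * discountedValue δ' v (τ + 1) := by
        rw [hs.tsum_sub hs', tsum_mul_left, discountedValue, discountedValue]; ring
    _ = _ := by rw [discountedValue_eq_add hδ' hv τ]; ring

/-- **Patience Lemma.** If every `δ`-discounted continuation value of a
bounded real sequence lies in `[x̲, x̄]`, the same is true at every higher discount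
factor `δ' ∈ (δ, 1)`. -/
theorem patience_lemma (δ : ℝ) (hδ0 : 0 < δ) (hδ1 : δ < 1)
    (x : ℕ → ℝ) (hbdd : ∃ M : ℝ, ∀ t, |x t| ≤ M)
    (xlo xhi : ℝ)
    (h : ∀ τ : ℕ, xlo ≤ (1 - δ) * ∑' t : ℕ, δ ^ t * x (τ + t) ∧
        (1 - δ) * ∑' t : ℕ, δ ^ t * x (τ + t) ≤ xhi) :
    ∀ δ' : ℝ, δ < δ' → δ' < 1 →
      ∀ τ : ℕ, xlo ≤ (1 - δ') * ∑' t : ℕ, δ' ^ t * x (τ + t) ∧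
        (1 - δ') * ∑' t : ℕ, δ' ^ t * x (τ + t) ≤ xhi := by
  obtain ⟨M, hM⟩ := hbdd
  intro δ' hδδ' hδ'1 τ
  have hδ'0 : 0 < δ' := hδ0.trans hδδ'
  have hpos : 0 < 1 - δ := sub_pos.2 hδ1
  have hv : ∀ n, discountedValue δ x n ∈ Icc xlo xhi := h
  have hmix := one_sub_mul_discountedValue_eq hδ0.le hδ1 hδ'0.le hδ'1 hM τ
  have hcomb : discountedValue δ' x τ =
      (1 - δ') / (1 - δ) * discountedValue δ x τ +
        (δ' - δ) / (1 - δ) * discountedValue δ' (discountedValue δ x) (τ + 1) := by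
    field_simp; linarith
  show discountedValue δ' x τ ∈ Icc xlo xhi
  rw [hcomb]
  exact convex_Icc xlo xhi (hv τ) (discountedValue_mem_Icc hδ'0.le hδ'1 hv (τ + 1))
    (div_nonneg (by linarith) hpos.le) (div_nonneg (by linarith) hpos.le) (by field_simp; ring)
end

section
/- Exact discounted representation with controlled continuations (Dasgupta–Ghosh): let A be a finite nonempty set, g : A → ℝ^n, F := convexHull(g(A)), v ∈ F, and ε > 0. Then there exists δ̂ ∈ (0,1) such that for every δ ∈ [δ̂,1) there is a sequence (a^{(t)})_{t∈ℕ} of elements of A satisfying v = (1−δ) Σ_{t=0}^∞ δ^t g(a^{(t)}) and, for every τ ≥ 1, ‖(1−δ) Σ_{t=τ}^∞ δ^{t−τ} g(a^{(t)}) − v‖ ≤ ε. -/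
/-!
By Carathéodory, `v = ∑ i, w i • z i` with finitely many points `z i` of the range of `g` and
weights `w i > 0`. Follow the continuation weights `λ τ` (the payoff from time `τ` on is
`∑ i, λ τ i • z i`): playing `i` at time `τ` forces `λ (τ + 1) = δ⁻¹ • (λ τ - (1 - δ) • eᵢ)`.
Always play the index where `λ τ - w` is largest. Since `λ τ - w` sums to zero, that entry is
nonnegative, and once `2 (1 - δ) ≤ min w` this keeps `λ τ ≥ w - 2 (1 - δ)` forever. A zero-sum
vector bounded below by `-2 (1 - δ)` has `ℓ¹`-norm at most `4 (1 - δ) |ι|`, so every continuation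
payoff lies within `O(1 - δ)` of `v`.
-/

open Filter Topology

section Discounting

variable {E : Type*} [NormedAddCommGroup E] [NormedSpace ℝ E]

theorem eq_smul_tsum_of_eq_smul_add_smul [CompleteSpace E] {δ C : ℝ} (hδ0 : 0 ≤ δ)
    (hδ1 : δ < 1) {W x : ℕ → E} (hW : ∀ t, ‖W t‖ ≤ C) (hx : ∀ t, ‖x t‖ ≤ C)
    (hrec : ∀ t, W t = (1 - δ) • x t + δ • W (t + 1)) :
    W 0 = (1 - δ) • ∑' t, δ ^ t • x t := by
  have hpartial : ∀ T, W 0 = (1 - δ) • ∑ t ∈ Finset.range T, δ ^ t • x t + δ ^ T • W T := by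
    intro T
    induction T with
    | zero => simp
    | succ T ih =>
      rw [ih, hrec T, Finset.sum_range_succ, pow_succ]
      module
  have hsummable : Summable fun t => δ ^ t • x t := by
    refine Summable.of_norm_bounded ((summable_geometric_of_lt_one hδ0 hδ1).mul_right C) ?_
    intro t
    rw [norm_smul, norm_pow, Real.norm_of_nonneg hδ0]
    exact mul_le_mul_of_nonneg_left (hx t) (pow_nonneg hδ0 t)
  have htail : Tendsto (fun T => δ ^ T • W T) atTop (𝓝 0) := by
    have hgeom := (tendsto_pow_atTop_nhds_zero_of_lt_one hδ0 hδ1).mul_const C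
    refine squeeze_zero_norm (fun T => ?_) (hgeom.trans_eq (by rw [zero_mul]))
    rw [norm_smul, norm_pow, Real.norm_of_nonneg hδ0]
    exact mul_le_mul_of_nonneg_left (hW T) (pow_nonneg hδ0 T)
  have hlim : Tendsto (fun T => W 0 - δ ^ T • W T) atTop (𝓝 (W 0)) := by
    simpa using tendsto_const_nhds.sub htail
  refine tendsto_nhds_unique hlim ((hsummable.hasSum.tendsto_sum_nat.const_smul _).congr ?_)
  intro T
  rw [hpartial T, add_sub_cancel_right]

end Discounting

section DeviationBound

variable {E : Type*} [NormedAddCommGroup E] [NormedSpace ℝ E] {ι : Type*} [Fintype ι]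
  [Nonempty ι]

theorem norm_sum_smul_le_of_sum_eq_zero (z : ι → E) {d : ι → ℝ} {b M : ℝ}
    (hd : ∑ i, d i = 0) (hb : ∀ i, -b ≤ d i) (hz : ∀ i, ‖z i‖ ≤ M) :
    ‖∑ i, d i • z i‖ ≤ 2 * b * Fintype.card ι * M := by
  obtain ⟨j, -, hj⟩ := Finset.exists_le_of_sum_le Finset.univ_nonempty
    (hd.le.trans_eq Finset.sum_const_zero.symm : ∑ i, d i ≤ ∑ _i : ι, (0 : ℝ))
  have hM0 : 0 ≤ M := (norm_nonneg _).trans (hz j)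
  calc ‖∑ i, d i • z i‖ ≤ ∑ i, |d i| * M := by
        refine (norm_sum_le _ _).trans (Finset.sum_le_sum fun i _ => ?_)
        rw [norm_smul, Real.norm_eq_abs]
        exact mul_le_mul_of_nonneg_left (hz i) (abs_nonneg _)
    _ ≤ ∑ i, (d i + 2 * b) * M := by
        refine Finset.sum_le_sum fun i _ => mul_le_mul_of_nonneg_right ?_ hM0
        rcases abs_cases (d i) with ⟨h, -⟩ | ⟨h, -⟩ <;> linarith [hb i, hb j]
    _ = 2 * b * Fintype.card ι * M := by
        rw [← Finset.sum_mul, Finset.sum_add_distrib, hd, Finset.sum_const, Finset.card_univ,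
          nsmul_eq_mul]
        ring

end DeviationBound

section GreedyWeights

variable {E : Type*} [NormedAddCommGroup E] [NormedSpace ℝ E] {ι : Type*} [Fintype ι]
  [Nonempty ι]

noncomputable def argmax (d : ι → ℝ) : ι := (Finite.exists_max d).choose

theorem le_apply_argmax (d : ι → ℝ) (i : ι) : d i ≤ d (argmax d) :=
  (Finite.exists_max d).choose_spec i

theorem zero_le_apply_argmax {d : ι → ℝ} (hd : ∑ i, d i = 0) : 0 ≤ d (argmax d) := by
  obtain ⟨i, -, hi⟩ := Finset.exists_le_of_sum_le Finset.univ_nonempty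
    (hd.ge.trans_eq' Finset.sum_const_zero.symm : ∑ _i : ι, (0 : ℝ) ≤ ∑ i, d i)
  exact hi.trans (le_apply_argmax d i)

variable [DecidableEq ι]

noncomputable def greedyWeights (w : ι → ℝ) (δ : ℝ) : ℕ → ι → ℝ
  | 0 => w
  | t + 1 => δ⁻¹ • (greedyWeights w δ t -
      Pi.single (argmax (greedyWeights w δ t - w)) (1 - δ))

noncomputable def greedySeq (w : ι → ℝ) (δ : ℝ) (t : ℕ) : ι :=
  argmax (greedyWeights w δ t - w)

variable {w : ι → ℝ} {δ : ℝ}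

theorem greedyWeights_zero (w : ι → ℝ) (δ : ℝ) : greedyWeights w δ 0 = w :=
  rfl

theorem greedyWeights_succ (w : ι → ℝ) (δ : ℝ) (t : ℕ) :
    greedyWeights w δ (t + 1) =
      δ⁻¹ • (greedyWeights w δ t - Pi.single (greedySeq w δ t) (1 - δ)) :=
  rfl

theorem greedyWeights_eq_single_add_smul (hδ : δ ≠ 0) (t : ℕ) :
    greedyWeights w δ t =
      Pi.single (greedySeq w δ t) (1 - δ) + δ • greedyWeights w δ (t + 1) := by
  rw [greedyWeights_succ, smul_inv_smul₀ hδ, add_sub_cancel]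

theorem sum_greedyWeights_and_le (hδ0 : 0 < δ) (hδ1 : δ ≤ 1)
    (hw : ∀ i, 2 * (1 - δ) ≤ w i) (hw1 : ∑ i, w i = 1) (t : ℕ) :
    ∑ i, greedyWeights w δ t i = 1 ∧ ∀ i, w i - 2 * (1 - δ) ≤ greedyWeights w δ t i := by
  induction t with
  | zero => exact ⟨hw1, fun i => by rw [greedyWeights_zero]; linarith [hw i]⟩
  | succ t ih =>
    obtain ⟨hsum, hlow⟩ := ih
    have hp : w (greedySeq w δ t) ≤ greedyWeights w δ t (greedySeq w δ t) := by
      simpa [greedySeq] using zero_le_apply_argmax (d := greedyWeights w δ t - w)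
        (by simp [Finset.sum_sub_distrib, hsum, hw1])
    simp only [greedyWeights_succ, Pi.smul_apply, Pi.sub_apply, smul_eq_mul]
    set p := greedySeq w δ t
    set l := greedyWeights w δ t
    refine ⟨?_, fun i => ?_⟩
    · rw [← Finset.mul_sum, Finset.sum_sub_distrib, hsum, Finset.sum_pi_single',
        if_pos (Finset.mem_univ p)]
      field_simp
      ring
    · have hi : w i - 2 * (1 - δ) ≤ l i - (Pi.single p (1 - δ) : ι → ℝ) i := by
        rcases eq_or_ne i p with rfl | hip
        · rw [Pi.single_eq_same]; linarith
        · rw [Pi.single_eq_of_ne hip, sub_zero]; exact hlow i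
      calc w i - 2 * (1 - δ) ≤ l i - (Pi.single p (1 - δ) : ι → ℝ) i := hi
        _ ≤ δ⁻¹ * (l i - (Pi.single p (1 - δ) : ι → ℝ) i) :=
          le_mul_of_one_le_left (by linarith [hw i]) (one_le_inv₀ hδ0 |>.2 hδ1)

theorem norm_sum_greedyWeights_smul_sub_le (hδ0 : 0 < δ) (hδ1 : δ ≤ 1)
    (hw : ∀ i, 2 * (1 - δ) ≤ w i) (hw1 : ∑ i, w i = 1) {z : ι → E} {M : ℝ}
    (hz : ∀ i, ‖z i‖ ≤ M) (τ : ℕ) :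
    ‖∑ i, greedyWeights w δ τ i • z i - ∑ i, w i • z i‖ ≤
      4 * (1 - δ) * Fintype.card ι * M := by
  obtain ⟨hsum, hlow⟩ := sum_greedyWeights_and_le hδ0 hδ1 hw hw1 τ
  rw [← Finset.sum_sub_distrib]
  simp_rw [← sub_smul]
  convert norm_sum_smul_le_of_sum_eq_zero z (d := fun i => greedyWeights w δ τ i - w i)
    (b := 2 * (1 - δ)) (by simp [Finset.sum_sub_distrib, hsum, hw1])
    (fun i => by linarith [hlow i]) hz using 1
  ring

theorem tsum_greedySeq_eq [CompleteSpace E] (hδ0 : 0 < δ) (hδ1 : δ < 1)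
    (hw : ∀ i, 2 * (1 - δ) ≤ w i) (hw1 : ∑ i, w i = 1) (z : ι → E) (τ : ℕ) :
    (1 - δ) • ∑' t, δ ^ t • z (greedySeq w δ (τ + t)) = ∑ i, greedyWeights w δ τ i • z i := by
  obtain ⟨M, hM⟩ := Finite.exists_le fun i => ‖z i‖
  have hW : ∀ t, ‖∑ i, greedyWeights w δ t i • z i‖ ≤ M := fun t => by
    obtain ⟨hsum, hlow⟩ := sum_greedyWeights_and_le hδ0 hδ1.le hw hw1 t
    rw [← mem_closedBall_zero_iff]
    exact (convex_closedBall 0 M).sum_mem (fun i _ => by linarith [hw i, hlow i]) hsum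
      fun i _ => mem_closedBall_zero_iff.2 (hM i)
  refine (eq_smul_tsum_of_eq_smul_add_smul hδ0.le hδ1 (fun t => hW (τ + t)) (fun t => hM _)
    fun t => ?_).symm
  simp only [← Fintype.linearCombination_apply ℝ]
  rw [greedyWeights_eq_single_add_smul hδ0.ne' (τ + t), map_add, map_smul,
    Fintype.linearCombination_apply_single, add_assoc]

end GreedyWeights

theorem exists_forall_of_eventually_nhdsLT_one {p : ℝ → Prop} (h : ∀ᶠ δ in 𝓝[<] 1, p δ) :
    ∃ δhat : ℝ, 0 < δhat ∧ δhat < 1 ∧ ∀ δ, δhat ≤ δ → δ < 1 → p δ := by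
  obtain ⟨l, hl, hsub⟩ := mem_nhdsLT_iff_exists_Ioo_subset.1 h
  have hl : l < 1 := hl
  refine ⟨max (1 / 2) ((l + 1) / 2), by positivity, max_lt (by norm_num) (by linarith),
    fun δ hδ hδ1 => hsub ⟨?_, hδ1⟩⟩
  linarith [le_max_right (1 / 2 : ℝ) ((l + 1) / 2)]

theorem dasgupta_ghosh_general {n : ℕ} {A : Type*}
    (g : A → EuclideanSpace ℝ (Fin n)) (v : EuclideanSpace ℝ (Fin n))
    (hv : v ∈ convexHull ℝ (Set.range g)) (ε : ℝ) (hε : 0 < ε) :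
    ∃ δhat : ℝ, 0 < δhat ∧ δhat < 1 ∧
      ∀ δ : ℝ, δhat ≤ δ → δ < 1 →
        ∃ a : ℕ → A,
          v = (1 - δ) • ∑' t : ℕ, δ ^ t • g (a t) ∧
          ∀ τ : ℕ, 1 ≤ τ →
            ‖(1 - δ) • (∑' t : ℕ, δ ^ t • g (a (τ + t))) - v‖ ≤ ε := by
  classical
  obtain ⟨ι, _, z, w, hz, -, hw0, hw1, rfl⟩ := eq_pos_convex_span_of_mem_convexHull hv
  have : Nonempty ι :=
    Finset.univ_nonempty_iff.1 (Finset.nonempty_of_sum_ne_zero (hw1 ▸ one_ne_zero))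
  choose f hf using fun i => hz (Set.mem_range_self i)
  obtain ⟨M, hM⟩ := Finite.exists_le fun i => ‖z i‖
  have hβ : Tendsto (fun δ : ℝ => 1 - δ) (𝓝[<] 1) (𝓝 0) :=
    tendsto_nhdsWithin_of_tendsto_nhds ((continuous_sub_left 1).tendsto' 1 0 (sub_self 1))
  have hev : ∀ᶠ δ in 𝓝[<] 1,
      (∀ i, 2 * (1 - δ) ≤ w i) ∧ 4 * (1 - δ) * Fintype.card ι * M ≤ ε :=
    (eventually_all.2 fun i =>
      (hβ.const_mul 2).eventually (eventually_le_nhds (by simpa using hw0 i))).and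
    ((((hβ.const_mul 4).mul_const _).mul_const _).eventually
      (eventually_le_nhds (by simpa using hε)))
  obtain ⟨δhat, hpos, hlt, hδhat⟩ := exists_forall_of_eventually_nhdsLT_one hev
  refine ⟨δhat, hpos, hlt, fun δ hδ hδ1 => ?_⟩
  obtain ⟨hw, hδε⟩ := hδhat δ hδ hδ1
  have hδ0 : 0 < δ := hpos.trans_le hδ
  refine ⟨f ∘ greedySeq w δ, ?_, fun τ _ => ?_⟩
  · simpa [hf, greedyWeights_zero] using (tsum_greedySeq_eq hδ0 hδ1 hw hw1 z 0).symm
  · simp only [Function.comp_apply, hf]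
    rw [tsum_greedySeq_eq hδ0 hδ1 hw hw1 z τ]
    exact (norm_sum_greedyWeights_smul_sub_le hδ0 hδ1.le hw hw1 hM τ).trans hδε

/-- **Dasgupta–Ghosh.** Any point of the convex hull of finitely many
payoff vectors is, for every high enough discount factor, the exact discounted payoff
of a deterministic sequence of pure actions all of whose continuation payoffs stay
within `ε` of the target. -/
theorem dasgupta_ghosh {n : ℕ} {A : Type*} [Fintype A] [Nonempty A]
    (g : A → EuclideanSpace ℝ (Fin n)) (v : EuclideanSpace ℝ (Fin n))
    (hv : v ∈ convexHull ℝ (Set.range g)) (ε : ℝ) (hε : 0 < ε) :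
    ∃ δhat : ℝ, 0 < δhat ∧ δhat < 1 ∧
      ∀ δ : ℝ, δhat ≤ δ → δ < 1 →
        ∃ a : ℕ → A,
          v = (1 - δ) • ∑' t : ℕ, δ ^ t • g (a t) ∧
          ∀ τ : ℕ, 1 ≤ τ →
            ‖(1 - δ) • (∑' t : ℕ, δ ^ t • g (a (τ + t))) - v‖ ≤ ε :=
  dasgupta_ghosh_general g v hv ε hε
end

section
/- Strictness of the minmax comparisons in an explicit game: consider the two-player stage game where player 1 chooses a row in {T,B}, player 2 chooses a column in {L,M,R}, and the payoff pairs (g_1,g_2) are: (T,L) ↦ (1,0), (T,M) ↦ (0,0), (T,R) ↦ (0,3), (B,L) ↦ (0,0), (B,M) ↦ (3,0), (B,R) ↦ (1,1). For this game, v̲_1 = 1/2, v̲_1^MI = 3/4, and v̲_1^pure = 1; in particular v̲_1 < v̲_1^MI < v̲_1^pure. -/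
open Finset

namespace Stmt14

/-- Rows (player 1's actions). -/
inductive Row | T | B
  deriving DecidableEq

instance instFintypeRow : Fintype Row :=
  ⟨{Row.T, Row.B}, fun x => by cases x <;> simp⟩

/-- Columns (player 2's actions). -/
inductive Col | L | M | R
  deriving DecidableEq

instance instFintypeCol : Fintype Col :=
  ⟨{Col.L, Col.M, Col.R}, fun x => by cases x <;> simp⟩

/-- Player 1's rewards. -/
noncomputable def g1 : Row → Col → ℝ
  | .T, .L => 1 | .T, .M => 0 | .T, .R => 0
  | .B, .L => 0 | .B, .M => 3 | .B, .R => 1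

/-- Player 2's rewards. -/
noncomputable def g2 : Row → Col → ℝ
  | .T, .L => 0 | .T, .M => 0 | .T, .R => 3
  | .B, .L => 0 | .B, .M => 0 | .B, .R => 1

/-- `α` is a mixed action of player 1. -/
def IsMixedRow (α : Row → ℝ) : Prop := (∀ r, 0 ≤ α r) ∧ (∑ r, α r) = 1

/-- `β` is a mixed action of player 2. -/
def IsMixedCol (β : Col → ℝ) : Prop := (∀ c, 0 ≤ β c) ∧ (∑ c, β c) = 1

/-- Player 1's payoff from the pure row `r` against the mixed column `β`. -/
noncomputable def pay1 (r : Row) (β : Col → ℝ) : ℝ := ∑ c, β c * g1 r c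

/-- Player 2's payoff from the pure column `c` against the mixed row `α`. -/
noncomputable def pay2 (α : Row → ℝ) (c : Col) : ℝ := ∑ r, α r * g2 r c

/-- Player 1's expected reward from the mixed profile `(α, β)`. -/
noncomputable def E1 (α : Row → ℝ) (β : Col → ℝ) : ℝ := ∑ r, ∑ c, α r * β c * g1 r c

/-- Player 2's expected reward from the mixed profile `(α, β)`. -/
noncomputable def E2 (α : Row → ℝ) (β : Col → ℝ) : ℝ := ∑ r, ∑ c, α r * β c * g2 r c

/-- `(α, β)` is a myopically indifferent mixed action profile (a member of `𝒜^MI`). -/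
def InMI (α : Row → ℝ) (β : Col → ℝ) : Prop :=
  IsMixedRow α ∧ IsMixedCol β ∧
    (∀ r, 0 < α r → pay1 r β = E1 α β) ∧
    (∀ c, 0 < β c → pay2 α c = E2 α β)

/-- Player 1's (mixed) minmax `v̲₁`. -/
noncomputable def v1 : ℝ :=
  sInf {x : ℝ | ∃ β : Col → ℝ, IsMixedCol β ∧ x = ⨆ r : Row, pay1 r β}

/-- Player 1's MI-minmax `v̲₁^MI`. -/
noncomputable def v1MI : ℝ :=
  sInf {x : ℝ | ∃ (α : Row → ℝ) (β : Col → ℝ), InMI α β ∧ x = ⨆ r : Row, pay1 r β}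

/-- Player 1's pure minmax `v̲₁^pure`. -/
noncomputable def v1pure : ℝ := ⨅ c : Col, ⨆ r : Row, g1 r c

/-!
Against a mixed column `β`, row `T` earns `β L` and row `B` earns `3 β M + β R`; since these sum to
at least `1`, one of them is at least `1/2`, attained at `β = (1/2, 0, 1/2)`. In an MI profile,
column `R` gives player 2 the positive payoff `3 α T + α B` while `L` and `M` give `0`, so
indifference forces `β R ∈ {0, 1}`. If `β R = 1`, row `B` earns `1`; if `β R = 0`, then
`β L + β M = 1` and the best reply earns at least `3/4`, attained at `β = (3/4, 1/4, 0)`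
against the pure row `T`. Every pure column leaves player 1 a payoff of at least `1`.
-/

instance : Nonempty Row := ⟨.T⟩

instance : Nonempty Col := ⟨.L⟩

lemma Row.sum_univ {M : Type*} [AddCommMonoid M] (f : Row → M) : ∑ r, f r = f .T + f .B := by
  rw [show (univ : Finset Row) = {.T, .B} from rfl, sum_insert (by decide), sum_singleton]

lemma Col.sum_univ {M : Type*} [AddCommMonoid M] (f : Col → M) :
    ∑ c, f c = f .L + f .M + f .R := by
  rw [show (univ : Finset Col) = {.L, .M, .R} from rfl, sum_insert (by decide),
    sum_insert (by decide), sum_singleton, add_assoc]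

lemma Row.iSup_eq_max {α : Type*} [ConditionallyCompleteLinearOrder α] (f : Row → α) :
    ⨆ r, f r = max (f .T) (f .B) :=
  le_antisymm (ciSup_le (by rintro (_ | _) <;> simp))
    (max_le (le_ciSup (Finite.bddAbove_range f) _) (le_ciSup (Finite.bddAbove_range f) _))

lemma Col.iInf_eq_min {α : Type*} [ConditionallyCompleteLinearOrder α] (f : Col → α) :
    ⨅ c, f c = min (f .L) (min (f .M) (f .R)) :=
  le_antisymm
    (le_min (ciInf_le (Finite.bddBelow_range f) _)
      (le_min (ciInf_le (Finite.bddBelow_range f) _) (ciInf_le (Finite.bddBelow_range f) _)))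
    (le_ciInf (by rintro (_ | _ | _) <;> simp))

lemma E2_eq_sum_pay2 (α : Row → ℝ) (β : Col → ℝ) : E2 α β = ∑ c, β c * pay2 α c := by
  simp only [E2, pay2, mul_sum]
  rw [sum_comm]
  exact sum_congr rfl fun _ _ => sum_congr rfl fun _ _ => by ring

lemma E1_eq_sum_pay1 (α : Row → ℝ) (β : Col → ℝ) : E1 α β = ∑ r, α r * pay1 r β := by
  simp only [E1, pay1, mul_sum, mul_assoc]

lemma pay1_T (β : Col → ℝ) : pay1 .T β = β .L := by simp [pay1, Col.sum_univ, g1]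

lemma pay1_B (β : Col → ℝ) : pay1 .B β = 3 * β .M + β .R := by
  simp [pay1, Col.sum_univ, g1, mul_comm]

lemma pay2_L (α : Row → ℝ) : pay2 α .L = 0 := by simp [pay2, Row.sum_univ, g2]

lemma pay2_M (α : Row → ℝ) : pay2 α .M = 0 := by simp [pay2, Row.sum_univ, g2]

lemma pay2_R (α : Row → ℝ) : pay2 α .R = 3 * α .T + α .B := by
  simp [pay2, Row.sum_univ, g2, mul_comm]

lemma E2_eq_mul_pay2_R (α : Row → ℝ) (β : Col → ℝ) : E2 α β = β .R * pay2 α .R := by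
  simp [E2_eq_sum_pay2, Col.sum_univ, pay2_L, pay2_M]

lemma iSup_pay1 (β : Col → ℝ) : ⨆ r, pay1 r β = max (β .L) (3 * β .M + β .R) := by
  rw [Row.iSup_eq_max, pay1_T, pay1_B]

lemma IsMixedCol.half_le_iSup_pay1 {β : Col → ℝ} (hβ : IsMixedCol β) :
    1 / 2 ≤ ⨆ r, pay1 r β := by
  obtain ⟨hpos, hsum⟩ := hβ
  rw [Col.sum_univ] at hsum
  rw [iSup_pay1]
  linarith [le_max_left (β .L) (3 * β .M + β .R), le_max_right (β .L) (3 * β .M + β .R), hpos .M]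

lemma one_le_pay2_R {α : Row → ℝ} (hα : IsMixedRow α) : 1 ≤ pay2 α .R := by
  obtain ⟨hpos, hsum⟩ := hα
  rw [Row.sum_univ] at hsum
  rw [pay2_R]
  linarith [hpos .T]

lemma InMI.col_R_eq_one {α : Row → ℝ} {β : Col → ℝ} (h : InMI α β) (hR : 0 < β .R) :
    β .R = 1 := by
  obtain ⟨hα, -, -, hindiff⟩ := h
  have hpay : pay2 α .R = β .R * pay2 α .R := (hindiff .R hR).trans (E2_eq_mul_pay2_R α β)
  have hpos : pay2 α .R ≠ 0 := by linarith [one_le_pay2_R hα]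
  exact (mul_eq_right₀ hpos).mp hpay.symm

lemma InMI.three_quarters_le_iSup_pay1 {α : Row → ℝ} {β : Col → ℝ} (h : InMI α β) :
    3 / 4 ≤ ⨆ r, pay1 r β := by
  obtain ⟨hpos, hsum⟩ := h.2.1
  rw [Col.sum_univ] at hsum
  rw [iSup_pay1]
  have hT := le_max_left (β .L) (3 * β .M + β .R)
  have hB := le_max_right (β .L) (3 * β .M + β .R)
  rcases (hpos .R).eq_or_lt with hR | hR
  · rw [← hR] at hsum hT hB ⊢
    linarith
  · linarith [h.col_R_eq_one hR, hpos .M]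

lemma isLeast_v1 :
    IsLeast {x : ℝ | ∃ β : Col → ℝ, IsMixedCol β ∧ x = ⨆ r : Row, pay1 r β} (1 / 2) := by
  refine ⟨⟨fun | .L => 1 / 2 | .M => 0 | .R => 1 / 2, ⟨?_, ?_⟩, ?_⟩, ?_⟩
  · rintro (_ | _ | _) <;> norm_num
  · rw [Col.sum_univ]; norm_num
  · rw [iSup_pay1]; norm_num
  · rintro _ ⟨β, hβ, rfl⟩
    exact hβ.half_le_iSup_pay1

lemma isLeast_v1MI :
    IsLeast {x : ℝ | ∃ (α : Row → ℝ) (β : Col → ℝ), InMI α β ∧ x = ⨆ r : Row, pay1 r β}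
      (3 / 4) := by
  let α : Row → ℝ := fun | .T => 1 | .B => 0
  let β : Col → ℝ := fun | .L => 3 / 4 | .M => 1 / 4 | .R => 0
  refine ⟨⟨α, β, ⟨⟨?_, ?_⟩, ⟨?_, ?_⟩, ?_, ?_⟩, ?_⟩, ?_⟩
  · rintro (_ | _) <;> norm_num [α]
  · rw [Row.sum_univ]; norm_num [α]
  · rintro (_ | _ | _) <;> norm_num [β]
  · rw [Col.sum_univ]; norm_num [β]
  · rintro (_ | _) hr
    · simp [E1_eq_sum_pay1, Row.sum_univ, α]
    · norm_num [α] at hr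
  · rintro (_ | _ | _) hc
    · simp [E2_eq_mul_pay2_R, pay2_L, β]
    · simp [E2_eq_mul_pay2_R, pay2_M, β]
    · norm_num [β] at hc
  · rw [iSup_pay1]; norm_num [β]
  · rintro _ ⟨α, β, h, rfl⟩
    exact h.three_quarters_le_iSup_pay1

/-- In the explicit 2×3 game, `v̲₁ = 1/2 < v̲₁^MI = 3/4 <
v̲₁^pure = 1`. -/
theorem minmax_strict_example :
    v1 = 1 / 2 ∧ v1MI = 3 / 4 ∧ v1pure = 1 :=
  ⟨isLeast_v1.csInf_eq, isLeast_v1MI.csInf_eq, by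
    simp [v1pure, Col.iInf_eq_min, Row.iSup_eq_max, g1]⟩

end Stmt14
end

section
/- Discounted values of an increasing periodic sequence: let T ≥ 1 and let x : ℕ → ℝ be T-periodic (x(t+T) = x(t) for all t) with x(0) ≤ x(1) ≤ … ≤ x(T−1). Then for every δ ∈ (0,1): (i) (1−δ) Σ_{t=0}^∞ δ^t x(t) ≤ (1/T) Σ_{t=0}^{T−1} x(t), and (ii) for every k ∈ ℕ, (1−δ) Σ_{t=0}^∞ δ^t x(t) ≤ (1−δ) Σ_{t=0}^∞ δ^t x(t+k); that is, the δ-discounted value of the sequence started at phase 0 is at most the period mean and at most the δ-discounted value started at any other phase. -/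
/-!
Write `V k = ∑' t, δ ^ t * x (t + k)`. Splitting off one period gives
`V k = C k / (1 - δ ^ T)` with `C k = ∑_{j<T} δ ^ j * x (j + k)`, and `C 0 ≤ C k` by the
rearrangement inequality: the weights `δ ^ j` decrease, `x` increases on a period, and
`j ↦ x (j + k)` is a rotation of it. This is (ii). Averaging (ii) over `k < T` gives (i), since
every window of `T` consecutive terms sums to the period sum, so
`∑_{k<T} V k = (∑_{j<T} x j) / (1 - δ)`.
-/

open Finset Function

namespace Function.Periodic

variable {x : ℕ → ℝ} {T : ℕ}

theorem sum_range_add {M : Type*} [AddCommMonoid M] {f : ℕ → M} (hf : Periodic f T) (t : ℕ) :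
    ∑ k ∈ range T, f (t + k) = ∑ k ∈ range T, f k := by
  have hIco := sum_Ico_eq_sum_range f t (t + T)
  rw [Nat.add_sub_cancel_left] at hIco
  rw [← hIco, ← Nat.image_Ico_mod t T, sum_image (Nat.mod_injOn_Ico t T)]
  exact sum_congr rfl fun i _ => (hf.map_mod_nat i).symm

theorem abs_le_sum_range_abs (hx : Periodic x T) (hT : 0 < T) (t : ℕ) :
    |x t| ≤ ∑ j ∈ range T, |x j| := by
  rw [← hx.map_mod_nat t]
  exact single_le_sum (f := fun j => |x j|) (fun j _ => abs_nonneg _)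
    (mem_range.2 (Nat.mod_lt t hT))

theorem summable_pow_mul (hx : Periodic x T) (hT : 0 < T) {δ : ℝ} (hδ : |δ| < 1) :
    Summable fun t => δ ^ t * x t := by
  refine ((summable_geometric_of_lt_one (abs_nonneg δ) hδ).mul_right
    (∑ j ∈ range T, |x j|)).of_norm_bounded fun t => ?_
  rw [Real.norm_eq_abs, abs_mul, abs_pow]
  exact mul_le_mul_of_nonneg_left (hx.abs_le_sum_range_abs hT t) (by positivity)

/-- The tail after one period is `δ ^ T` times the whole series. -/
theorem tsum_pow_mul (hx : Periodic x T) {δ : ℝ} (hs : Summable fun t => δ ^ t * x t)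
    (hδ : δ ^ T ≠ 1) :
    ∑' t, δ ^ t * x t = (∑ j ∈ range T, δ ^ j * x j) / (1 - δ ^ T) := by
  have htail : ∑' t, δ ^ (t + T) * x (t + T) = δ ^ T * ∑' t, δ ^ t * x t := by
    rw [← tsum_mul_left]
    exact tsum_congr fun t => by rw [hx t, pow_add]; ring
  have hsplit := hs.sum_add_tsum_nat_add T
  rw [htail] at hsplit
  rw [eq_div_iff (sub_ne_zero.2 hδ.symm)]
  linarith

/-- The rearrangement inequality on `Fin T`, for the rotation by `k`. -/
theorem sum_range_mul_le_sum_range_mul_add (hx : Periodic x T) (hmono : MonotoneOn x (Set.Iio T))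
    {w : ℕ → ℝ} (hw : AntitoneOn w (Set.Iio T)) (k : ℕ) :
    ∑ j ∈ range T, w j * x j ≤ ∑ j ∈ range T, w j * x (j + k) := by
  rcases Nat.eq_zero_or_pos T with rfl | hT
  · simp
  have : NeZero T := ⟨hT.ne'⟩
  have hanti : Antivary (fun i : Fin T => w i) (fun i => x i) := fun i j hij =>
    hw i.isLt j.isLt (not_lt.1 fun hji => (hmono j.isLt i.isLt hji.le).not_gt hij)
  let σ : Equiv.Perm (Fin T) := Equiv.addRight (Fin.ofNat T k)
  have hrot : ∀ i : Fin T, x (i + k) = x (σ i : ℕ) := fun i => by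
    rw [Equiv.coe_addRight, Fin.val_add, Fin.val_ofNat, Nat.add_mod_mod, hx.map_mod_nat]
  simpa only [← Fin.sum_univ_eq_sum_range (fun j => w j * x j),
    ← Fin.sum_univ_eq_sum_range (fun j => w j * x (j + k)), hrot]
    using hanti.sum_mul_le_sum_mul_comp_perm (σ := σ)

theorem sum_range_tsum_pow_mul_add (hx : Periodic x T) (hT : 0 < T) {δ : ℝ} (hδ : |δ| < 1) :
    ∑ k ∈ range T, ∑' t, δ ^ t * x (t + k) = (∑ j ∈ range T, x j) / (1 - δ) := by
  rw [← Summable.tsum_finsetSum fun k _ => (hx.add_const k).summable_pow_mul hT hδ]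
  simp_rw [← mul_sum, hx.sum_range_add]
  rw [tsum_mul_right, tsum_geometric_of_norm_lt_one (by rwa [Real.norm_eq_abs]), div_eq_inv_mul]

end Function.Periodic

/-- For a `T`-periodic real sequence that is increasing on a period
`{0, …, T−1}`, the discounted value started at phase `0` is at most the period mean,
and at most the discounted value started at any other phase. -/
theorem increasing_periodic_discounted (T : ℕ) (hT : 1 ≤ T) (x : ℕ → ℝ)
    (hper : ∀ t, x (t + T) = x t)
    (hmono : ∀ s t : ℕ, s ≤ t → t < T → x s ≤ x t)
    (δ : ℝ) (h0 : 0 < δ) (h1 : δ < 1) :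
    ((1 - δ) * ∑' t : ℕ, δ ^ t * x t ≤ (∑ t ∈ Finset.range T, x t) / T) ∧
      ∀ k : ℕ,
        (1 - δ) * ∑' t : ℕ, δ ^ t * x t ≤ (1 - δ) * ∑' t : ℕ, δ ^ t * x (t + k) := by
  have hx : Periodic x T := hper
  have hδ : |δ| < 1 := by rwa [abs_of_pos h0]
  have hδT : δ ^ T < 1 := pow_lt_one₀ h0.le h1 (by omega)
  have hphase : ∀ k, ∑' t, δ ^ t * x t ≤ ∑' t, δ ^ t * x (t + k) := fun k => by
    rw [hx.tsum_pow_mul (hx.summable_pow_mul hT hδ) hδT.ne,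
      (hx.add_const k).tsum_pow_mul ((hx.add_const k).summable_pow_mul hT hδ) hδT.ne]
    refine div_le_div_of_nonneg_right ?_ (by linarith)
    exact hx.sum_range_mul_le_sum_range_mul_add (fun s _ t ht hst => hmono s t hst ht)
      (fun i _ j _ hij => pow_le_pow_of_le_one h0.le h1.le hij) k
  refine ⟨?_, fun k => mul_le_mul_of_nonneg_left (hphase k) (by linarith)⟩
  have hmean : (T : ℝ) * ∑' t, δ ^ t * x t ≤ (∑ j ∈ range T, x j) / (1 - δ) := by
    rw [← hx.sum_range_tsum_pow_mul_add hT hδ]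
    simpa using card_nsmul_le_sum (range T) _ _ fun k _ => hphase k
  have hTpos : (0 : ℝ) < T := by exact_mod_cast hT
  rw [le_div_iff₀ hTpos]
  rw [le_div_iff₀ (by linarith)] at hmean
  linarith
end
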